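/- Let q ≥ 2, p ≥ 1 be natural numbers, z an integer, and Q ≥ 1. Then ∫_0^1 |S_Q(α, z)| dα ≤ (6(1 + ln q))^{Q}, where S_Q(α, z) = Σ_{n < q^Q} e^{2πi(αn + (z/p)S(n))} and S(n) is the base-q digit sum of n. -/

import Mathlib

open Complex Finset

/-- `S q n` is the sum of the digits of `n` in base `q`. -/
def digitSum (q n : ℕ) : ℕ := (Nat.digits q n).sum

/-!
Writing `n = q m + d` with `d < q` gives `S(q m + d) = S(m) + d`, hence
`S_{Q+1}(α) = g(α + c) · S_Q(q α)` with `c = z / p` and `g(t) = ∑_{d < q} e(t d)`.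
Substituting `u = q α` and folding `[0, q]` onto `[0, 1]` by the `1`-periodicity of `S_Q`,
`∫₀¹ |S_{Q+1}| ≤ q⁻¹ · sup_β ∑_{k < q} |g((β + k) / q)| · ∫₀¹ |S_Q|`.
The points `(β + k) / q` are `1 / q`-spaced modulo `1`, and `|g(t)| ≤ min(q, 1 / (2 ‖t‖))`
where `‖t‖` is the distance to the nearest integer, so the supremum is a harmonic sum,
at most `3 q (1 + log q)`. Induction on `Q` even gives the bound `(3 (1 + log q))^Q`.
-/

open scoped Real
open Function

noncomputable def geomExpSum (q : ℕ) (t : ℝ) : ℂ :=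
  ∑ d ∈ range q, exp (2 * π * I * t) ^ d

noncomputable def digitExpSum (q : ℕ) (c : ℝ) (Q : ℕ) (α : ℝ) : ℂ :=
  ∑ n ∈ range (q ^ Q), exp (2 * π * I * (α * n + c * digitSum q n))

theorem digitSum_mul_add {q : ℕ} (hq : 1 < q) (m : ℕ) {d : ℕ} (hd : d < q) :
    digitSum q (q * m + d) = digitSum q m + d := by
  by_cases h : d = 0 ∧ m = 0
  · simp [h, digitSum]
  · rw [digitSum, add_comm, Nat.digits_add q hq d m hd (by tauto), List.sum_cons, add_comm,
      digitSum]

theorem Finset.sum_range_mul_eq_sum_sum {M : Type*} [AddCommMonoid M] (f : ℕ → M) (n m : ℕ) :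
    ∑ i ∈ range (n * m), f i = ∑ a ∈ range m, ∑ b ∈ range n, f (n * a + b) := by
  induction m with
  | zero => simp
  | succ m ih => rw [Nat.mul_succ, sum_range_add, ih, sum_range_succ]

theorem digitExpSum_succ {q : ℕ} (hq : 1 < q) (c : ℝ) (Q : ℕ) (α : ℝ) :
    digitExpSum q c (Q + 1) α = geomExpSum q (α + c) * digitExpSum q c Q (q * α) := by
  rw [digitExpSum, pow_succ', sum_range_mul_eq_sum_sum, mul_comm (geomExpSum _ _), digitExpSum,
    geomExpSum, sum_mul_sum]
  refine sum_congr rfl fun m _ => sum_congr rfl fun d hd => ?_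
  rw [digitSum_mul_add hq m (mem_range.mp hd), ← exp_nat_mul, ← exp_add]
  congr 1
  push_cast
  ring

theorem digitExpSum_zero (q : ℕ) (c : ℝ) (α : ℝ) : digitExpSum q c 0 α = 1 := by
  simp [digitExpSum, digitSum]

theorem digitExpSum_periodic (q : ℕ) (c : ℝ) (Q : ℕ) : Periodic (digitExpSum q c Q) 1 := by
  intro α
  refine sum_congr rfl fun n _ => ?_
  refine Eq.trans ?_ (exp_periodic.nat_mul n _)
  congr 1
  push_cast
  ring

@[fun_prop]
theorem continuous_digitExpSum (q : ℕ) (c : ℝ) (Q : ℕ) : Continuous (digitExpSum q c Q) := by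
  unfold digitExpSum
  fun_prop

@[fun_prop]
theorem continuous_geomExpSum (q : ℕ) : Continuous (geomExpSum q) := by
  unfold geomExpSum
  fun_prop

theorem geomExpSum_periodic (q : ℕ) : Periodic (geomExpSum q) 1 := by
  intro t
  rw [geomExpSum, geomExpSum, ofReal_add, ofReal_one, mul_add_one, exp_periodic]

theorem norm_exp_two_pi_I_mul (t : ℝ) : ‖exp (2 * π * I * t)‖ = 1 := by
  rw [norm_exp]
  simp

theorem norm_geomExpSum_le (q : ℕ) (t : ℝ) : ‖geomExpSum q t‖ ≤ q := by
  refine (norm_sum_le _ _).trans ?_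
  simp [norm_exp_two_pi_I_mul]

theorem two_mul_abs_sub_round_le_abs_sin (t : ℝ) : 2 * |t - round t| ≤ |Real.sin (π * t)| := by
  have hsin : Real.sin (π * t) = (-1) ^ round t * Real.sin (π * (t - round t)) := by
    rw [← Real.sin_add_int_mul_pi]
    ring_nf
  have hu : |π * (t - round t)| ≤ π / 2 := by
    rw [abs_mul, abs_of_pos Real.pi_pos]
    nlinarith [abs_sub_round t, Real.pi_pos]
  calc 2 * |t - round t| = 2 / π * |π * (t - round t)| := by
        rw [abs_mul, abs_of_pos Real.pi_pos]; field_simp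
    _ ≤ |Real.sin (π * (t - round t))| := Real.mul_abs_le_abs_sin hu
    _ = |Real.sin (π * t)| := by rw [hsin, abs_mul, abs_neg_one_zpow, one_mul]

theorem norm_exp_two_pi_I_mul_sub_one (t : ℝ) :
    ‖exp (2 * π * I * t) - 1‖ = 2 * |Real.sin (π * t)| := by
  have := norm_exp_I_mul_ofReal_sub_one (2 * π * t)
  push_cast at this
  rw [show 2 * π * I * t = I * (2 * π * t) by ring, this, norm_mul, Real.norm_ofNat,
    Real.norm_eq_abs]
  ring_nf

theorem norm_geomExpSum_mul_abs_sub_round_le (q : ℕ) (t : ℝ) :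
    ‖geomExpSum q t‖ * |t - round t| ≤ 1 / 2 := by
  set w := exp (2 * π * I * t)
  have hgeom : ‖geomExpSum q t‖ * ‖w - 1‖ ≤ 2 := by
    rw [← norm_mul, geomExpSum, geom_sum_mul]
    refine (norm_sub_le _ _).trans ?_
    rw [norm_pow, norm_exp_two_pi_I_mul, one_pow, norm_one]
    norm_num
  have hw : 4 * |t - round t| ≤ ‖w - 1‖ := by
    rw [norm_exp_two_pi_I_mul_sub_one]
    linarith [two_mul_abs_sub_round_le_abs_sin t]
  nlinarith [norm_nonneg (geomExpSum q t)]

noncomputable def geomExpSumMajorant (q j : ℕ) : ℝ := if j = 0 then q else q / (2 * j)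

theorem geomExpSumMajorant_nonneg (q j : ℕ) : 0 ≤ geomExpSumMajorant q j := by
  unfold geomExpSumMajorant
  split_ifs <;> positivity

theorem norm_geomExpSum_le_majorant {q j : ℕ} {t : ℝ} (h : (j : ℝ) / q ≤ |t - round t|) :
    ‖geomExpSum q t‖ ≤ geomExpSumMajorant q j := by
  unfold geomExpSumMajorant
  split_ifs with hj
  · exact norm_geomExpSum_le q t
  rcases Nat.eq_zero_or_pos q with rfl | hq
  · simp [geomExpSum]
  have hpos : 0 < (j : ℝ) / q := by positivity
  have hmul := norm_geomExpSum_mul_abs_sub_round_le q t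
  calc ‖geomExpSum q t‖ ≤ 1 / 2 / ((j : ℝ) / q) := by
        rw [le_div_iff₀ hpos]
        nlinarith [norm_nonneg (geomExpSum q t)]
    _ = q / (2 * j) := by field_simp

theorem norm_geomExpSum_add_div_le {q j : ℕ} (hj : j < q) {y : ℝ}
    (hy : y ∈ Set.Ico (0 : ℝ) 1) :
    ‖geomExpSum q ((y + j) / q)‖ ≤
      geomExpSumMajorant q j + geomExpSumMajorant q (q - 1 - j) := by
  have hq : (0 : ℝ) < q := by exact_mod_cast hj.pos
  have hjq : (j : ℝ) + 1 ≤ q := by exact_mod_cast hj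
  set s := (y + j) / q
  have hs : s ∈ Set.Ico (0 : ℝ) 1 := by
    constructor
    · have := hy.1; positivity
    · rw [div_lt_one hq]; linarith [hy.2]
  rcases min_choice (Int.fract s) (1 - Int.fract s) with h | h <;>
    rw [← abs_sub_round_eq_min, Int.fract_eq_self.mpr hs] at h
  · have hle : (j : ℝ) / q ≤ |s - round s| := by
      rw [h]; exact div_le_div_of_nonneg_right (by linarith [hy.1]) hq.le
    linarith [norm_geomExpSum_le_majorant hle, geomExpSumMajorant_nonneg q (q - 1 - j)]
  · have hle : ((q - 1 - j : ℕ) : ℝ) / q ≤ |s - round s| := by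
      rw [h, le_sub_iff_add_le, ← add_div, div_le_one hq, Nat.cast_sub (by omega),
        Nat.cast_sub (by omega)]
      push_cast
      linarith [hy.2]
    linarith [norm_geomExpSum_le_majorant hle, geomExpSumMajorant_nonneg q j]

theorem sum_geomExpSumMajorant_le {q : ℕ} (hq : 1 ≤ q) :
    ∑ j ∈ range q, geomExpSumMajorant q j ≤ q + q / 2 * (1 + Real.log q) := by
  obtain ⟨r, rfl⟩ : ∃ r, q = r + 1 := ⟨q - 1, by omega⟩
  have hterm (i : ℕ) :
      geomExpSumMajorant (r + 1) (i + 1) = (r + 1 : ℝ) / 2 * (i + 1 : ℝ)⁻¹ := by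
    rw [geomExpSumMajorant, if_neg i.succ_ne_zero]
    push_cast
    field_simp
  have hlog : Real.log r ≤ Real.log (r + 1 : ℕ) := by
    rcases r.eq_zero_or_pos with rfl | hr
    · simp
    · gcongr; omega
  have hharm : (harmonic r : ℝ) ≤ 1 + Real.log (r + 1 : ℕ) := by
    linarith [harmonic_le_one_add_log r]
  rw [sum_range_succ', geomExpSumMajorant, if_pos rfl]
  simp only [hterm, ← mul_sum]
  rw [harmonic] at hharm
  push_cast at hharm ⊢
  have hhalf : (0 : ℝ) ≤ (r + 1) / 2 := by positivity
  nlinarith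

theorem Function.Periodic.sum_range_add {α M : Type*} [Semiring α] [AddCancelCommMonoid M]
    {f : α → M} {n : ℕ} (hf : Periodic f n) :
    Periodic (fun x => ∑ k ∈ range n, f (x + k)) 1 := by
  intro x
  show ∑ k ∈ range n, f (x + 1 + k) = ∑ k ∈ range n, f (x + k)
  have hsucc := sum_range_succ (fun k => f (x + k)) n
  have hsucc' := sum_range_succ' (fun k => f (x + k)) n
  rw [hf x] at hsucc
  rw [hsucc, Nat.cast_zero, add_zero] at hsucc'
  refine (sum_congr rfl fun k _ => ?_).trans (add_right_cancel hsucc').symm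
  push_cast
  rw [add_comm (k : α), add_assoc]

theorem sum_norm_geomExpSum_le {q : ℕ} (hq : 1 ≤ q) (β : ℝ) :
    ∑ k ∈ range q, ‖geomExpSum q ((β + k) / q)‖ ≤ 3 * q * (1 + Real.log q) := by
  have hper : Periodic (fun x => ∑ k ∈ range q, ‖geomExpSum q ((x + k) / q)‖) 1 :=
    Periodic.sum_range_add (f := fun x => ‖geomExpSum q (x / q)‖) fun x => by
      have hq' : (q : ℝ) ≠ 0 := by positivity
      simp only [add_div, div_self hq', geomExpSum_periodic q (x / q)]
  have hfract : Int.fract β ∈ Set.Ico (0 : ℝ) 1 := ⟨Int.fract_nonneg β, Int.fract_lt_one β⟩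
  have hlog : 0 ≤ Real.log q := Real.log_nonneg (by exact_mod_cast hq)
  calc ∑ k ∈ range q, ‖geomExpSum q ((β + k) / q)‖
      = ∑ k ∈ range q, ‖geomExpSum q ((Int.fract β + k) / q)‖ := by
        rw [← Int.self_sub_floor, ← mul_one (⌊β⌋ : ℝ)]
        exact (hper.sub_int_mul_eq ⌊β⌋).symm
    _ ≤ ∑ j ∈ range q, (geomExpSumMajorant q j + geomExpSumMajorant q (q - 1 - j)) :=
        sum_le_sum fun j hj => norm_geomExpSum_add_div_le (mem_range.mp hj) hfract
    _ = 2 * ∑ j ∈ range q, geomExpSumMajorant q j := by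
        rw [sum_add_distrib, sum_range_reflect (geomExpSumMajorant q), two_mul]
    _ ≤ 3 * q * (1 + Real.log q) := by
        nlinarith [sum_geomExpSumMajorant_le hq]

open MeasureTheory intervalIntegral

theorem intervalIntegral.integral_zero_natCast_eq_integral_sum_add {E : Type*}
    [NormedAddCommGroup E] [NormedSpace ℝ E] {f : ℝ → E} {n : ℕ}
    (hf : IntervalIntegrable f volume 0 n) :
    ∫ x in (0 : ℝ)..n, f x = ∫ u in (0 : ℝ)..1, ∑ k ∈ range n, f (u + k) := by
  have hint : ∀ k < n, IntervalIntegrable f volume k (k + 1 : ℕ) := fun k hk =>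
    hf.mono_set <| Set.uIcc_subset_uIcc
      (Set.mem_uIcc_of_le (by positivity) (by exact_mod_cast hk.le))
      (Set.mem_uIcc_of_le (by positivity) (by exact_mod_cast hk))
  rw [integral_finsetSum fun k hk => by
    simpa using (hint k (mem_range.mp hk)).comp_add_right (k : ℝ)]
  simp_rw [integral_comp_add_right, zero_add, add_comm (1 : ℝ), ← Nat.cast_add_one]
  simpa using (sum_integral_adjacent_intervals (a := fun k : ℕ => (k : ℝ)) hint).symm

theorem integral_norm_digitExpSum_succ {q : ℕ} (hq : 1 < q) (c : ℝ) (Q : ℕ) :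
    ∫ α in (0 : ℝ)..1, ‖digitExpSum q c (Q + 1) α‖ =
      (q : ℝ)⁻¹ * ∫ u in (0 : ℝ)..1,
        ‖digitExpSum q c Q u‖ * ∑ k ∈ range q, ‖geomExpSum q ((u + k) / q + c)‖ := by
  have hq' : (q : ℝ) ≠ 0 := by positivity
  set F : ℝ → ℝ := fun u => ‖digitExpSum q c Q u‖ * ‖geomExpSum q (u / q + c)‖
  have hF : Continuous F := by fun_prop
  calc ∫ α in (0 : ℝ)..1, ‖digitExpSum q c (Q + 1) α‖
      = ∫ α in (0 : ℝ)..1, F (q * α) := integral_congr fun α _ => by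
        rw [digitExpSum_succ hq, norm_mul, mul_comm]
        simp only [F, mul_div_cancel_left₀ α hq']
    _ = (q : ℝ)⁻¹ * ∫ u in (0 : ℝ)..q, F u := by
        rw [integral_comp_mul_left F hq', mul_zero, mul_one, smul_eq_mul]
    _ = _ := by
        rw [integral_zero_natCast_eq_integral_sum_add (hF.intervalIntegrable _ _)]
        refine congrArg _ (integral_congr fun u _ => ?_)
        have hper (k : ℕ) : digitExpSum q c Q (u + k) = digitExpSum q c Q u := by
          simpa using (digitExpSum_periodic q c Q).nat_mul k u
        simp only [F, mul_sum, add_div, hper]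

theorem integral_norm_digitExpSum_succ_le {q : ℕ} (hq : 1 < q) (c : ℝ) (Q : ℕ) :
    ∫ α in (0 : ℝ)..1, ‖digitExpSum q c (Q + 1) α‖ ≤
      3 * (1 + Real.log q) * ∫ α in (0 : ℝ)..1, ‖digitExpSum q c Q α‖ := by
  have hq' : (q : ℝ) ≠ 0 := by positivity
  have hbound (u : ℝ) :
      ∑ k ∈ range q, ‖geomExpSum q ((u + k) / q + c)‖ ≤ 3 * q * (1 + Real.log q) := by
    convert sum_norm_geomExpSum_le hq.le (u + q * c) using 4 with k
    rw [add_right_comm, add_div _ (q * c : ℝ), mul_div_cancel_left₀ c hq']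
  rw [integral_norm_digitExpSum_succ hq]
  calc (q : ℝ)⁻¹ * ∫ u in (0 : ℝ)..1,
        ‖digitExpSum q c Q u‖ * ∑ k ∈ range q, ‖geomExpSum q ((u + k) / q + c)‖
      ≤ (q : ℝ)⁻¹ *
          ∫ u in (0 : ℝ)..1, ‖digitExpSum q c Q u‖ * (3 * q * (1 + Real.log q)) := by
        gcongr
        refine integral_mono zero_le_one ?_ ?_ fun u => ?_
        · exact Continuous.intervalIntegrable (by fun_prop) _ _
        · exact Continuous.intervalIntegrable (by fun_prop) _ _
        · exact mul_le_mul_of_nonneg_left (hbound u) (norm_nonneg _)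
    _ = 3 * (1 + Real.log q) * ∫ α in (0 : ℝ)..1, ‖digitExpSum q c Q α‖ := by
        rw [intervalIntegral.integral_mul_const]
        field_simp

theorem integral_norm_digitExpSum_le {q : ℕ} (hq : 1 < q) (c : ℝ) (Q : ℕ) :
    ∫ α in (0 : ℝ)..1, ‖digitExpSum q c Q α‖ ≤ (3 * (1 + Real.log q)) ^ Q := by
  induction Q with
  | zero => simp [digitExpSum_zero]
  | succ Q ih =>
    have hlog : 0 ≤ Real.log q := Real.log_nonneg (by exact_mod_cast hq.le)
    calc ∫ α in (0 : ℝ)..1, ‖digitExpSum q c (Q + 1) α‖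
        ≤ 3 * (1 + Real.log q) * ∫ α in (0 : ℝ)..1, ‖digitExpSum q c Q α‖ :=
          integral_norm_digitExpSum_succ_le hq c Q
      _ ≤ 3 * (1 + Real.log q) * (3 * (1 + Real.log q)) ^ Q := by gcongr
      _ = (3 * (1 + Real.log q)) ^ (Q + 1) := by ring

theorem integral_abs_SQ_le_general (q p Q : ℕ) (hq : 2 ≤ q) (z : ℤ) :
    (∫ α in (0:ℝ)..1,
        ‖∑ n ∈ Finset.range (q ^ Q),
            Complex.exp (2 * Real.pi * Complex.I *
              ((α : ℂ) * n + (z : ℂ) / (p : ℂ) * (digitSum q n : ℂ)))‖) ≤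
      (6 * (1 + Real.log q)) ^ Q := by
  have hlog : 0 ≤ Real.log q := Real.log_nonneg (by exact_mod_cast hq.trans' one_le_two)
  calc _ = ∫ α in (0 : ℝ)..1, ‖digitExpSum q (z / p) Q α‖ := by
        simp [digitExpSum]
    _ ≤ (3 * (1 + Real.log q)) ^ Q := integral_norm_digitExpSum_le hq _ Q
    _ ≤ (6 * (1 + Real.log q)) ^ Q := by gcongr; linarith

theorem integral_abs_SQ_le (q p Q : ℕ) (hq : 2 ≤ q) (hp : 1 ≤ p) (hQ : 1 ≤ Q) (z : ℤ) :
    (∫ α in (0:ℝ)..1,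
        ‖∑ n ∈ Finset.range (q ^ Q),
            Complex.exp (2 * Real.pi * Complex.I *
              ((α : ℂ) * n + (z : ℂ) / (p : ℂ) * (digitSum q n : ℂ)))‖) ≤
      (6 * (1 + Real.log q)) ^ Q :=
  integral_abs_SQ_le_general q p Q hq z
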